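/- Let 0 < α < 1 and γ > 0. For every real z with |z| < γ log(1/α), the exponential generating series ∑_{n=0}^∞ (z^n/n!) t_n converges absolutely and equals (1−α)^γ (1 − α e^{−z/γ})^{−γ}. -/

import Mathlib

/-- Pochhammer symbol `(γ)_l = γ(γ+1)⋯(γ+l−1)`. -/
noncomputable def poch (γ : ℝ) (l : ℕ) : ℝ := ∏ i ∈ Finset.range l, (γ + i)

/-- Stirling numbers of the second kind. -/
def stirling2 : ℕ → ℕ → ℕ
  | 0, 0 => 1
  | 0, _+1 => 0
  | _+1, 0 => 0
  | n+1, k+1 => (k+1) * stirling2 n (k+1) + stirling2 n k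

/-- `t_n(α,γ) = (−1)^n γ^{−n} ∑_{i=0}^n S(n,i) (γ)_i (α/(1−α))^i`. -/
noncomputable def tcoef (α γ : ℝ) (n : ℕ) : ℝ :=
  (-1)^n * (γ^n)⁻¹ *
    ∑ i ∈ Finset.range (n+1), (stirling2 n i : ℝ) * poch γ i * (α/(1-α))^i
/-!
Put `x = α/(1-α)` and `u = -z/γ`; then `zⁿ/n! · tₙ = uⁿ/n! · ∑ᵢ S(n,i) (γ)ᵢ xⁱ`. Summing over `n`
first, `∑ₙ S(n,i) uⁿ/n! = (eᵘ - 1)ⁱ/i!` (because `i! S(n,i)` is the `i`-th forward difference of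
`xⁿ` at `0`, an alternating sum of the `kⁿ`), and then the binomial series
`∑ᵢ (γ)ᵢ wⁱ/i! = (1 - w)^(-γ)` at `w = x(eᵘ - 1)` gives the value, as
`1 - x(eᵘ - 1) = (1 - αeᵘ)/(1 - α)`. The bound on `|z|` says exactly that `x(e^|u| - 1) < 1`, which
makes the double series absolutely convergent, so the order of summation may be exchanged.
-/

open Finset fwdDiff
open scoped Nat

theorem stirling2_eq_stirlingSecond : stirling2 = Nat.stirlingSecond := by
  funext n k
  induction n generalizing k with
  | zero => cases k <;> rfl
  | succ n ih =>
    cases k with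
    | zero => rfl
    | succ k => simp only [stirling2, Nat.stirlingSecond_succ_succ, ih]

theorem poch_eq_ascPochhammer_eval (γ : ℝ) (n : ℕ) : poch γ n = (ascPochhammer ℝ n).eval γ := by
  induction n with
  | zero => simp [poch]
  | succ n ih => rw [poch, prod_range_succ, ← poch, ih, ascPochhammer_succ_eval]

section ForwardDifference

variable {R : Type*} [CommRing R]

theorem fwdDiff_iter_succ_natCast_mul (g : ℕ → R) (i y : ℕ) :
    (Δ_[1])^[i + 1] (fun x : ℕ ↦ (x : R) * g x) y
      = y * (Δ_[1])^[i + 1] g y + (i + 1) * (Δ_[1])^[i] g (y + 1) := by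
  induction i generalizing y with
  | zero =>
    simp only [zero_add, Function.iterate_one, fwdDiff, Nat.cast_add, Nat.cast_one,
      Function.iterate_zero, id_eq]
    ring
  | succ i ih =>
    rw [Function.iterate_succ_apply', fwdDiff, ih, ih, Function.iterate_succ_apply' _ (i + 1),
      fwdDiff, Function.iterate_succ_apply' _ i, fwdDiff]
    push_cast
    ring

theorem fwdDiff_iter_pow_apply_zero (n i : ℕ) :
    (Δ_[1])^[i] (fun x : ℕ ↦ (x : R) ^ n) 0 = i ! * Nat.stirlingSecond n i := by
  induction n generalizing i with
  | zero =>
    cases i with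
    | zero => simp
    | succ i =>
      simp [Function.iterate_succ_apply, Function.iterate_fixed (fwdDiff_const 1 (0 : R))]
  | succ n ih =>
    cases i with
    | zero => simp
    | succ i =>
      have hshift : (Δ_[1])^[i + 1] (fun x : ℕ ↦ (x : R) ^ n) 0
          = (Δ_[1])^[i] (fun x : ℕ ↦ (x : R) ^ n) 1
            - (Δ_[1])^[i] (fun x : ℕ ↦ (x : R) ^ n) 0 := by
        rw [Function.iterate_succ_apply', fwdDiff, zero_add]
      rw [ih, ih] at hshift
      simp_rw [pow_succ']
      rw [fwdDiff_iter_succ_natCast_mul, zero_add, Nat.stirlingSecond_succ_succ]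
      push_cast [Nat.factorial_succ] at hshift ⊢
      linear_combination -(↑i + 1) * hshift

end ForwardDifference

theorem hasSum_stirlingSecond_mul_pow_div_factorial (i : ℕ) (t : ℝ) :
    HasSum (fun n ↦ Nat.stirlingSecond n i * t ^ n / n !) ((Real.exp t - 1) ^ i / i !) := by
  set c : ℕ → ℝ := fun k ↦ (-1) ^ (i - k) * i.choose k
  have hterm (n : ℕ) : (i ! : ℝ) * (Nat.stirlingSecond n i * t ^ n / n !)
      = ∑ k ∈ range (i + 1), c k * ((k * t) ^ n / n !) := by
    rw [← mul_div_assoc, ← mul_assoc, ← fwdDiff_iter_pow_apply_zero, fwdDiff_iter_eq_sum_shift,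
      sum_mul, sum_div]
    refine sum_congr rfl fun k _ ↦ ?_
    simp only [smul_eq_mul, mul_one, zero_add, zsmul_eq_mul, Int.cast_mul, Int.cast_pow,
      Int.cast_neg, Int.cast_one, Int.cast_natCast, mul_pow, c]
    ring
  have hexp : ∑ k ∈ range (i + 1), c k * Real.exp (k * t) = (Real.exp t - 1) ^ i := by
    rw [sub_eq_add_neg, add_pow]
    refine sum_congr rfl fun k _ ↦ ?_
    rw [Real.exp_nat_mul]
    ring
  have hsum : HasSum (fun n ↦ (i ! : ℝ) * (Nat.stirlingSecond n i * t ^ n / n !))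
      ((Real.exp t - 1) ^ i) := by
    simp only [hterm, ← hexp]
    exact hasSum_sum fun (k : ℕ) _ ↦
      (Real.exp_eq_exp_ℝ ▸ NormedSpace.expSeries_div_hasSum_exp ((k : ℝ) * t)).mul_left (c k)
  have hi : (i ! : ℝ) ≠ 0 := by positivity
  simpa only [mul_div_cancel_left₀ _ hi] using hsum.div_const (i ! : ℝ)

theorem Real.hasSum_ascPochhammer_mul_pow_div_factorial (a : ℝ) {w : ℝ} (hw : |w| < 1) :
    HasSum (fun n ↦ (ascPochhammer ℝ n).eval a * w ^ n / n !) ((1 - w) ^ (-a)) := by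
  have hw' : w ∈ Metric.eball (0 : ℝ) 1 := by
    simpa [Metric.mem_eball, edist_zero_right, ← ofReal_norm] using hw
  have := (Real.one_div_one_sub_rpow_hasFPowerSeriesOnBall_zero a).hasSum hw'
  rw [FormalMultilinearSeries.ofScalars_apply_eq', zero_add, one_div,
    ← Real.rpow_neg (by linarith [le_abs_self w])] at this
  refine this.congr_fun fun n ↦ ?_
  rw [← Ring.multichoose_eq, ← Polynomial.ascPochhammer_smeval_eq_eval,
    ← Ring.factorial_nsmul_multichoose_eq_ascPochhammer, smul_eq_mul, nsmul_eq_mul]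
  field_simp

theorem Real.abs_exp_sub_one_le_exp_abs_sub_one (u : ℝ) : |Real.exp u - 1| ≤ Real.exp |u| - 1 := by
  rcases le_total 0 u with hu | hu
  · rw [abs_of_nonneg hu, abs_of_nonneg (sub_nonneg.2 (Real.one_le_exp hu))]
  · rw [abs_of_nonpos hu, abs_of_nonpos (sub_nonpos.2 (Real.exp_le_one_iff.2 hu))]
    linarith [Real.add_one_le_exp u, Real.add_one_le_exp (-u)]

theorem summable_abs_tsum_and_hasSum_tsum {ι κ : Type*} {f : ι → κ → ℝ} {b : κ → ℝ} {B : ℝ}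
    (habs : ∀ i, Summable fun n ↦ |f n i|) (habs_tsum : Summable fun i ↦ ∑' n, |f n i|)
    (hcol : ∀ i, HasSum (fun n ↦ f n i) (b i)) (hb : HasSum b B) :
    Summable (fun n ↦ |∑' i, f n i|) ∧ HasSum (fun n ↦ ∑' i, f n i) B := by
  have hprod_abs : Summable fun p : ι × κ ↦ |f p.1 p.2| :=
    ((summable_prod_of_nonneg (f := fun p : κ × ι ↦ |f p.2 p.1|) fun _ ↦ abs_nonneg _).2
      ⟨habs, habs_tsum⟩).prod_symm
  have hprod : Summable fun p : ι × κ ↦ f p.1 p.2 :=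
    (summable_abs_iff (f := fun p : ι × κ ↦ f p.1 p.2)).1 hprod_abs
  have hrow_abs : Summable fun n ↦ ∑' i, |f n i| := hprod_abs.prod
  refine ⟨Summable.of_nonneg_of_le (fun _ ↦ abs_nonneg _) (fun n ↦ ?_) hrow_abs, ?_⟩
  · have hrow : Summable fun i ↦ ‖f n i‖ := by
      simpa only [Real.norm_eq_abs] using hprod_abs.prod_factor n
    simpa only [Real.norm_eq_abs] using norm_tsum_le_tsum_norm hrow
  · have hB : ∑' n, ∑' i, f n i = B := by
      rw [← Summable.tsum_comm (f := f) hprod, ← hb.tsum_eq]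
      exact tsum_congr fun i ↦ (hcol i).tsum_eq
    exact hB ▸ hprod.prod.hasSum

noncomputable def stirlingPochhammerPoly (γ x : ℝ) (n : ℕ) : ℝ :=
  ∑ i ∈ range (n + 1), Nat.stirlingSecond n i * (ascPochhammer ℝ i).eval γ * x ^ i

theorem tcoef_eq_neg_inv_pow_mul_stirlingPochhammerPoly (α γ : ℝ) (n : ℕ) :
    tcoef α γ n = (-γ⁻¹) ^ n * stirlingPochhammerPoly γ (α / (1 - α)) n := by
  simp only [tcoef, stirlingPochhammerPoly, stirling2_eq_stirlingSecond, poch_eq_ascPochhammer_eval]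
  ring

theorem hasSum_pow_div_factorial_mul_stirlingPochhammerPoly {γ x : ℝ} (u : ℝ) (hγ : 0 < γ)
    (hx : 0 ≤ x) (hxu : x * (Real.exp |u| - 1) < 1) :
    Summable (fun n ↦ |u ^ n / n ! * stirlingPochhammerPoly γ x n|) ∧
      HasSum (fun n ↦ u ^ n / n ! * stirlingPochhammerPoly γ x n)
        ((1 - x * (Real.exp u - 1)) ^ (-γ)) := by
  set c : ℕ → ℝ := fun i ↦ (ascPochhammer ℝ i).eval γ * x ^ i
  have hc (i : ℕ) : 0 ≤ c i := mul_nonneg (ascPochhammer_pos i γ hγ).le (pow_nonneg hx i)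
  set f : ℝ → ℕ → ℕ → ℝ := fun v n i ↦ c i * (Nat.stirlingSecond n i * v ^ n / n !)
  have hcol (v : ℝ) (i : ℕ) :
      HasSum (fun n ↦ f v n i) ((ascPochhammer ℝ i).eval γ * (x * (Real.exp v - 1)) ^ i / i !) := by
    rw [show (ascPochhammer ℝ i).eval γ * (x * (Real.exp v - 1)) ^ i / i !
        = c i * ((Real.exp v - 1) ^ i / i !) by simp only [c, mul_pow]; ring]
    exact (hasSum_stirlingSecond_mul_pow_div_factorial i v).mul_left (c i)
  have habs (n i : ℕ) : |f u n i| = f |u| n i := by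
    simp only [f, abs_mul, abs_div, abs_pow, abs_of_nonneg (hc i), Nat.abs_cast]
  have hrow (n : ℕ) : ∑' i, f u n i = u ^ n / n ! * stirlingPochhammerPoly γ x n := by
    rw [tsum_eq_sum (s := range (n + 1)), stirlingPochhammerPoly, mul_sum]
    · exact sum_congr rfl fun i _ ↦ by simp only [f, c]; ring
    · intro i hi
      simp [f, Nat.stirlingSecond_eq_zero_of_lt (by simpa using hi : n < i)]
  have hw : |x * (Real.exp u - 1)| < 1 := by
    rw [abs_mul, abs_of_nonneg hx]
    exact (mul_le_mul_of_nonneg_left (Real.abs_exp_sub_one_le_exp_abs_sub_one u) hx).trans_lt hxu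
  have hw_abs : |x * (Real.exp |u| - 1)| < 1 := by
    rwa [abs_of_nonneg (mul_nonneg hx (sub_nonneg.2 (Real.one_le_exp (abs_nonneg u))))]
  simp only [← hrow]
  refine summable_abs_tsum_and_hasSum_tsum (fun i ↦ ?_) ?_ (hcol u)
    (Real.hasSum_ascPochhammer_mul_pow_div_factorial γ hw)
  · simpa only [habs] using (hcol |u| i).summable
  · simpa only [habs, (hcol |u| _).tsum_eq] using
      (Real.hasSum_ascPochhammer_mul_pow_div_factorial γ hw_abs).summable

theorem Real.mul_exp_abs_lt_one_of_abs_lt_log {α u : ℝ} (hα : 0 < α) (hu : |u| < Real.log (1 / α)) :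
    α * Real.exp |u| < 1 :=
  calc α * Real.exp |u| < α * (1 / α) := by
        gcongr; rwa [← Real.exp_lt_exp, Real.exp_log (by positivity)] at hu
    _ = 1 := mul_one_div_cancel hα.ne'

theorem one_sub_div_one_sub_mul_sub_one_rpow_neg {α y : ℝ} (γ : ℝ) (hα : α < 1)
    (hy : 0 ≤ 1 - α * y) :
    (1 - α / (1 - α) * (y - 1)) ^ (-γ) = (1 - α) ^ γ * (1 - α * y) ^ (-γ) := by
  have hα' : 0 < 1 - α := sub_pos.2 hα
  rw [show 1 - α / (1 - α) * (y - 1) = (1 - α * y) / (1 - α) by field_simp; ring,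
    Real.div_rpow hy hα'.le, Real.rpow_neg hα'.le, div_inv_eq_mul, mul_comm]

/-- For `0 < α < 1`, `γ > 0` and real `z` with `|z| < γ log(1/α)`, the exponential generating
series `∑ (zⁿ/n!) t_n` converges absolutely and equals `(1−α)^γ (1 − α e^{−z/γ})^{−γ}`. -/
theorem tcoef_exp_generating_function (α γ : ℝ) (hα0 : 0 < α) (hα1 : α < 1) (hγ : 0 < γ)
    (z : ℝ) (hz : |z| < γ * Real.log (1/α)) :
    Summable (fun n : ℕ => |z^n / (Nat.factorial n) * tcoef α γ n|) ∧
    ∑' n : ℕ, z^n / (Nat.factorial n) * tcoef α γ n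
      = (1 - α) ^ γ * (1 - α * Real.exp (-z/γ)) ^ (-γ) := by
  have hα : 0 < 1 - α := sub_pos.2 hα1
  set u := -z / γ
  have hαu : α * Real.exp |u| < 1 := Real.mul_exp_abs_lt_one_of_abs_lt_log hα0 <| by
    rwa [abs_div, abs_neg, abs_of_pos hγ, div_lt_iff₀' hγ]
  have hxu : α / (1 - α) * (Real.exp |u| - 1) < 1 := by
    rw [div_mul_eq_mul_div, div_lt_one hα]
    linarith
  obtain ⟨habs, hsum⟩ :=
    hasSum_pow_div_factorial_mul_stirlingPochhammerPoly u hγ (div_pos hα0 hα).le hxu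
  have hterm (n : ℕ) : z ^ n / n ! * tcoef α γ n
      = u ^ n / n ! * stirlingPochhammerPoly γ (α / (1 - α)) n := by
    rw [tcoef_eq_neg_inv_pow_mul_stirlingPochhammerPoly]
    ring
  have hpos : 0 ≤ 1 - α * Real.exp u := by
    nlinarith [Real.exp_le_exp.2 (le_abs_self u)]
  simp_rw [hterm]
  exact ⟨habs, by rw [hsum.tsum_eq, one_sub_div_one_sub_mul_sub_one_rpow_neg γ hα1 hpos]⟩
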